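/- Let ν > 1/2, n ≥ 1 and x ∈ [−1,1]. If 0 ≤ λ ≤ 1, then P^{(ν)*}_n(1, λ) > 0 and |P^{(ν)*}_n(x, λ)| ≤ P^{(ν)*}_n(1, λ). If 1 < λ < 2ν or λ < 0, then P^{(ν)*}_n(1, λ) > 0 and |P^{(ν)*}_n(x, λ)| ≤ (|2ν(2λ−1) − λ|/(2ν − λ)) · P^{(ν)*}_n(1, λ). -/

import Mathlib

open Polynomial Filter MeasureTheory

noncomputable section

/-- Recurrence coefficients `β_k = k(k+2ν−1)/(4(k+ν)(k+ν−1))` of the monic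
ultraspherical polynomials. -/
def ultraBeta (ν : ℝ) (k : ℕ) : ℝ :=
  k * (k + 2 * ν - 1) / (4 * (k + ν) * (k + ν - 1))

/-- Monic ultraspherical polynomials `P^{(ν)}_0 = 1`, `P^{(ν)}_1 = X`,
`P^{(ν)}_{k+1} = X·P^{(ν)}_k − β_k·P^{(ν)}_{k−1}`. -/
def ultraP (ν : ℝ) : ℕ → Polynomial ℝ
  | 0 => 1
  | 1 => X
  | (k + 2) => X * ultraP ν (k + 1) - C (ultraBeta ν (k + 1)) * ultraP ν k

/-- First-order numerator polynomials `Q^{(ν)}_0 = 1`, `Q^{(ν)}_1 = X`,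
`Q^{(ν)}_{k+1} = X·Q^{(ν)}_k − β_{k+1}·Q^{(ν)}_{k−1}`. -/
def ultraQ (ν : ℝ) : ℕ → Polynomial ℝ
  | 0 => 1
  | 1 => X
  | (k + 2) => X * ultraQ ν (k + 1) - C (ultraBeta ν (k + 2)) * ultraQ ν k

/-- Co-dilated ultraspherical polynomials: same recurrence as `ultraP ν`, except that
the single coefficient `β_1` is replaced by `λ·β_1`. -/
def ultraPstar (ν lam : ℝ) : ℕ → Polynomial ℝ
  | 0 => 1
  | 1 => X
  | (k + 2) => X * ultraPstar ν lam (k + 1) -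
      C (if k + 1 = 1 then lam * ultraBeta ν 1 else ultraBeta ν (k + 1)) * ultraPstar ν lam k

/-!
A monic family with recurrence coefficients `b` expands in a family with coefficients `g` with
nonnegative connection coefficients as soon as `b n ≤ g j` for `1 ≤ j ≤ n`; hence the bound
`|p_n(x)| ≤ p_n(1)` passes from the second family to the first. For `ν > 1/2` and `λ ≤ 1` the
coefficients of `P^{(ν)*}` are dominated in this way by those of the Legendre polynomials
(`ν = 1/2`, where `β_k = k²/(4k²-1)` decreases), and the Legendre polynomials satisfy the bound
by Sonine's argument. For `1 < λ < 2ν` one writes `P*_{m+1} = λ P_{m+1} + (1-λ) X Q_m` with the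
associated polynomials `Q`; both families satisfy the bound, and `(2ν-1) Q_m(1) < 2ν P_{m+1}(1)`
yields the constant. For `λ < 0` the
constant is at least `1`.
-/

def threeTermPoly (c : ℕ → ℝ) : ℕ → ℝ[X]
  | 0 => 1
  | 1 => X
  | k + 2 => X * threeTermPoly c (k + 1) - C (c (k + 1)) * threeTermPoly c k

namespace threeTermPoly

variable (c : ℕ → ℝ)

@[simp] lemma zero : threeTermPoly c 0 = 1 := rfl
@[simp] lemma one : threeTermPoly c 1 = X := rfl
lemma add_two (k : ℕ) :
    threeTermPoly c (k + 2) = X * threeTermPoly c (k + 1) - C (c (k + 1)) * threeTermPoly c k :=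
  rfl

lemma eval_add_two (k : ℕ) (y : ℝ) : (threeTermPoly c (k + 2)).eval y =
    y * (threeTermPoly c (k + 1)).eval y - c (k + 1) * (threeTermPoly c k).eval y := by
  simp [add_two]

lemma eval_neg (y : ℝ) (n : ℕ) :
    (threeTermPoly c n).eval (-y) = (-1) ^ n * (threeTermPoly c n).eval y := by
  induction n using Nat.twoStepInduction with
  | zero => simp
  | one => simp
  | more n ih₀ ih₁ => rw [eval_add_two, eval_add_two, ih₀, ih₁]; ring

lemma derivative_add_two (k : ℕ) :
    derivative (threeTermPoly c (k + 2)) = threeTermPoly c (k + 1) +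
      X * derivative (threeTermPoly c (k + 1)) -
        C (c (k + 1)) * derivative (threeTermPoly c k) := by
  simp only [add_two, derivative_sub, derivative_mul, derivative_X, derivative_C,
    one_mul, zero_mul, zero_add]

end threeTermPoly

lemma ultraP_eq (ν : ℝ) : ultraP ν = threeTermPoly (ultraBeta ν) := by
  funext n
  induction n using Nat.twoStepInduction with
  | zero => rfl
  | one => rfl
  | more n ih₀ ih₁ => rw [ultraP, threeTermPoly.add_two, ih₀, ih₁]

lemma ultraQ_eq (ν : ℝ) : ultraQ ν = threeTermPoly (fun k ↦ ultraBeta ν (k + 1)) := by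
  funext n
  induction n using Nat.twoStepInduction with
  | zero => rfl
  | one => rfl
  | more n ih₀ ih₁ => rw [ultraQ, threeTermPoly.add_two, ih₀, ih₁]

lemma ultraPstar_eq (ν lam : ℝ) :
    ultraPstar ν lam =
      threeTermPoly (Function.update (ultraBeta ν) 1 (lam * ultraBeta ν 1)) := by
  funext n
  induction n using Nat.twoStepInduction with
  | zero => rfl
  | one => rfl
  | more n ih₀ ih₁ =>
    rw [ultraPstar, threeTermPoly.add_two, ih₀, ih₁, Function.update_apply]

lemma threeTermPoly_update_one (c : ℕ → ℝ) (lam : ℝ) (m : ℕ) :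
    threeTermPoly (Function.update c 1 (lam * c 1)) (m + 1) =
      C lam * threeTermPoly c (m + 1) +
        C (1 - lam) * (X * threeTermPoly (fun k ↦ c (k + 1)) m) := by
  induction m using Nat.twoStepInduction with
  | zero => simp only [zero_add, threeTermPoly.one, threeTermPoly.zero, map_sub, map_one]; ring
  | one =>
    rw [show 1 + 1 = 0 + 2 from rfl]
    simp only [threeTermPoly.add_two, zero_add, threeTermPoly.one, threeTermPoly.zero,
      Function.update_self, map_mul, map_sub, map_one]
    ring
  | more m ih₀ ih₁ =>
    rw [threeTermPoly.add_two, ih₀, ih₁, Function.update_of_ne (by omega),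
      threeTermPoly.add_two c (m + 1), threeTermPoly.add_two (fun k ↦ c (k + 1)) m]
    ring

-- The recurrence comes from `X p_k = p_{k+1} + g k p_{k-1}` for `p = threeTermPoly g`.
def connCoeff (g b : ℕ → ℝ) : ℕ → ℕ → ℝ
  | 0, k => if k = 0 then 1 else 0
  | 1, k => if k = 1 then 1 else 0
  | n + 2, k => (if k = 0 then 0 else connCoeff g b (n + 1) (k - 1)) +
      g (k + 1) * connCoeff g b (n + 1) (k + 1) - b (n + 1) * connCoeff g b n k

namespace connCoeff

variable (g b : ℕ → ℝ)

lemma add_two (n k : ℕ) : connCoeff g b (n + 2) k =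
    (if k = 0 then 0 else connCoeff g b (n + 1) (k - 1)) +
      g (k + 1) * connCoeff g b (n + 1) (k + 1) - b (n + 1) * connCoeff g b n k := by
  rw [connCoeff]

lemma eq_zero_of_lt {n k : ℕ} (h : n < k) : connCoeff g b n k = 0 := by
  induction n using Nat.twoStepInduction generalizing k with
  | zero => simp [connCoeff, h.ne']
  | one => simp [connCoeff, h.ne']
  | more n ih₀ ih₁ => rw [add_two, ih₁ (by omega), ih₁ (by omega), ih₀ (by omega)]; simp

lemma self (n : ℕ) : connCoeff g b n n = 1 := by
  induction n using Nat.twoStepInduction with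
  | zero => simp [connCoeff]
  | one => simp [connCoeff]
  | more n _ ih₁ =>
    rw [add_two, eq_zero_of_lt g b (k := n + 2 + 1) (by omega),
      eq_zero_of_lt g b (k := n + 2) (by omega)]
    simpa using ih₁

end connCoeff

lemma threeTermPoly_X_mul_sum (g a : ℕ → ℝ) (N : ℕ) :
    X * ∑ k ∈ Finset.range (N + 1), C (a k) * threeTermPoly g k =
      ∑ k ∈ Finset.range (N + 1), C (a k) * threeTermPoly g (k + 1) +
        ∑ k ∈ Finset.range N, C (g (k + 1) * a (k + 1)) * threeTermPoly g k := by
  induction N with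
  | zero => simp
  | succ N ih =>
    rw [Finset.sum_range_succ, mul_add, ih]
    simp only [Finset.sum_range_succ, threeTermPoly.add_two, map_mul]
    ring

lemma threeTermPoly_eq_sum_connCoeff (g b : ℕ → ℝ) (n : ℕ) :
    threeTermPoly b n =
      ∑ k ∈ Finset.range (n + 1), C (connCoeff g b n k) * threeTermPoly g k := by
  induction n using Nat.twoStepInduction with
  | zero => simp [connCoeff]
  | one => simp [connCoeff]
  | more n ih₀ ih₁ =>
    have shift : ∑ k ∈ Finset.range (n + 3),
        C (if k = 0 then 0 else connCoeff g b (n + 1) (k - 1)) * threeTermPoly g k =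
        ∑ k ∈ Finset.range (n + 2), C (connCoeff g b (n + 1) k) * threeTermPoly g (k + 1) := by
      simp [Finset.sum_range_succ' _ (n + 2)]
    have drop₁ : ∑ k ∈ Finset.range (n + 3),
        C (g (k + 1) * connCoeff g b (n + 1) (k + 1)) * threeTermPoly g k =
        ∑ k ∈ Finset.range (n + 1),
          C (g (k + 1) * connCoeff g b (n + 1) (k + 1)) * threeTermPoly g k :=
      Finset.eventually_constant_sum
        (fun k hk ↦ by simp [connCoeff.eq_zero_of_lt g b (show n + 1 < k + 1 by omega)])
        (by omega)
    have drop₀ : ∑ k ∈ Finset.range (n + 3), C (connCoeff g b n k) * threeTermPoly g k =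
        ∑ k ∈ Finset.range (n + 1), C (connCoeff g b n k) * threeTermPoly g k :=
      Finset.eventually_constant_sum
        (fun k hk ↦ by simp [connCoeff.eq_zero_of_lt g b (show n < k by omega)]) (by omega)
    simp only [connCoeff.add_two, map_sub, map_add, sub_mul, add_mul, Finset.sum_sub_distrib,
      Finset.sum_add_distrib, shift, drop₁]
    rw [threeTermPoly.add_two, ih₁, ih₀, threeTermPoly_X_mul_sum, ← drop₀, Finset.mul_sum]
    simp only [map_mul, mul_assoc]

section Comparison

variable {g b : ℕ → ℝ} (hg : ∀ j, 1 ≤ j → 0 ≤ g j)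
  (hbg : ∀ n j, 1 ≤ j → j ≤ n → b n ≤ g j)
include hg hbg

-- With `a = connCoeff g b`, the invariant `a n k ≤ a (n + 1) (k + 1)` is what keeps
-- `g (k + 1) * a (n + 1) (k + 1) - b (n + 1) * a n k` nonnegative.
lemma connCoeff_nonneg_and_le_succ (n : ℕ) :
    (∀ k, 0 ≤ connCoeff g b n k) ∧
      ∀ k, connCoeff g b n k ≤ connCoeff g b (n + 1) (k + 1) := by
  have step : ∀ m k, (∀ j, 0 ≤ connCoeff g b m j) →
      connCoeff g b m k ≤ connCoeff g b (m + 1) (k + 1) →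
      0 ≤ connCoeff g b (m + 1) (k + 1) →
      0 ≤ g (k + 1) * connCoeff g b (m + 1) (k + 1) - b (m + 1) * connCoeff g b m k := by
    intro m k hm hmono hpos
    rcases lt_or_ge m k with hmk | hkm
    · rw [connCoeff.eq_zero_of_lt g b hmk, mul_zero, sub_zero]
      exact mul_nonneg (hg _ le_add_self) hpos
    · exact sub_nonneg.2 (mul_le_mul (hbg _ _ le_add_self (by omega)) hmono (hm k)
        (hg _ le_add_self))
  have succ_succ : ∀ m k, connCoeff g b (m + 3) (k + 1) = connCoeff g b (m + 2) k +
      (g (k + 2) * connCoeff g b (m + 2) (k + 2) - b (m + 2) * connCoeff g b (m + 1) (k + 1)) := by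
    intro m k
    rw [connCoeff.add_two]
    simp only [add_eq_zero, one_ne_zero, and_false, if_false, add_tsub_cancel_right]
    ring
  induction n using Nat.twoStepInduction with
  | zero => refine ⟨fun k ↦ ?_, fun k ↦ ?_⟩ <;> rcases k with _ | k <;> simp [connCoeff]
  | one =>
    refine ⟨fun k ↦ ?_, fun k ↦ ?_⟩
    · simp only [connCoeff]; split_ifs <;> norm_num
    · rw [connCoeff.add_two]; rcases k with _ | _ | k <;> simp [connCoeff]
  | more n ih₀ ih₁ =>
    have nonneg : ∀ k, 0 ≤ connCoeff g b (n + 2) k := by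
      intro k
      rw [connCoeff.add_two, add_sub_assoc]
      refine add_nonneg ?_ (step n k ih₀.1 (ih₀.2 k) (ih₁.1 _))
      split_ifs
      exacts [le_rfl, ih₁.1 _]
    refine ⟨nonneg, fun k ↦ ?_⟩
    rw [succ_succ]
    exact le_add_of_nonneg_right (step (n + 1) (k + 1) ih₁.1 (ih₁.2 _) (nonneg _))

lemma threeTermPoly_eval_one_pos_of_le (hG : ∀ k, 0 < (threeTermPoly g k).eval 1) (n : ℕ) :
    0 < (threeTermPoly b n).eval 1 := by
  have ha := (connCoeff_nonneg_and_le_succ hg hbg n).1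
  simp only [threeTermPoly_eq_sum_connCoeff g b n, eval_finsetSum, eval_mul, eval_C]
  calc 0 < (threeTermPoly g n).eval 1 := hG n
    _ = connCoeff g b n n * (threeTermPoly g n).eval 1 := by rw [connCoeff.self, one_mul]
    _ ≤ _ := Finset.single_le_sum (fun k _ ↦ mul_nonneg (ha k) (hG k).le)
        (Finset.self_mem_range_succ n)

lemma abs_eval_threeTermPoly_le_of_le {x : ℝ}
    (hG : ∀ k, |(threeTermPoly g k).eval x| ≤ (threeTermPoly g k).eval 1) (n : ℕ) :
    |(threeTermPoly b n).eval x| ≤ (threeTermPoly b n).eval 1 := by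
  have ha := (connCoeff_nonneg_and_le_succ hg hbg n).1
  simp only [threeTermPoly_eq_sum_connCoeff g b n, eval_finsetSum, eval_mul, eval_C]
  refine (Finset.abs_sum_le_sum_abs _ _).trans (Finset.sum_le_sum fun k _ ↦ ?_)
  rw [abs_mul, abs_of_nonneg (ha k)]
  exact mul_le_mul_of_nonneg_left (hG k) (ha k)

end Comparison

lemma pos_of_threeTermRec_of_ratio {u r c : ℕ → ℝ} (hu₀ : 0 < u 0) (hr : ∀ k, 0 < r k)
    (hu₁ : u 1 = r 0 * u 0) (hu : ∀ k, u (k + 2) = u (k + 1) - c (k + 1) * u k)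
    (hrc : ∀ k, r (k + 1) * r k = r k - c (k + 1)) (k : ℕ) : 0 < u k := by
  have ratio : ∀ k, u (k + 1) = r k * u k := by
    intro k
    induction k with
    | zero => exact hu₁
    | succ k ih => rw [hu, ih, ← mul_assoc, hrc]; ring
  induction k with
  | zero => exact hu₀
  | succ k ih => rw [ratio]; exact mul_pos (hr k) ih

lemma ultraBeta_succ (ν : ℝ) (k : ℕ) :
    ultraBeta ν (k + 1) = (k + 1) * (k + 2 * ν) / (4 * (k + 1 + ν) * (k + ν)) := by
  rw [ultraBeta]
  push_cast
  ring_nf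

-- `P_n(1) = (2ν)_n / (2^n (ν)_n)`, whence the ratio `r`.
lemma ultraP_eval_one_pos {ν : ℝ} (hν : 0 < ν) (n : ℕ) : 0 < (ultraP ν n).eval 1 := by
  rw [ultraP_eq]
  refine pos_of_threeTermRec_of_ratio (c := ultraBeta ν)
    (u := fun k ↦ (threeTermPoly (ultraBeta ν) k).eval 1)
    (r := fun k ↦ (2 * ν + k) / (2 * (ν + k)))
    (by simp) (fun k ↦ by positivity) (by simp [hν.ne'])
    (fun k ↦ by simp [threeTermPoly.eval_add_two])
    (fun k ↦ ?_) n
  have : (k : ℝ) + 1 + ν ≠ 0 := by positivity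
  simp only [ultraBeta_succ, Nat.cast_add, Nat.cast_one]
  field_simp
  ring

-- The difference is `2ν (m+1)! / (2^(m+1) (ν)_(m+1))`, whence the ratio `r`.
lemma two_mul_sub_one_mul_ultraQ_eval_one_lt {ν : ℝ} (hν : 0 < ν) (m : ℕ) :
    (2 * ν - 1) * (ultraQ ν m).eval 1 < 2 * ν * (ultraP ν (m + 1)).eval 1 := by
  rw [← sub_pos, ultraP_eq, ultraQ_eq]
  refine pos_of_threeTermRec_of_ratio (c := fun k ↦ ultraBeta ν (k + 1))
    (u := fun k ↦ 2 * ν * (threeTermPoly (ultraBeta ν) (k + 1)).eval 1 -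
      (2 * ν - 1) * (threeTermPoly (fun k ↦ ultraBeta ν (k + 1)) k).eval 1)
    (r := fun k ↦ (k + 2) / (2 * (k + 1 + ν))) (by simp) (fun k ↦ by positivity) ?_
    (fun k ↦ ?_) (fun k ↦ ?_) m
  · simp [threeTermPoly.eval_add_two, ultraBeta]
    field_simp
    ring
  · simp only [threeTermPoly.eval_add_two]
    ring
  · have : (k : ℝ) + 1 + ν ≠ 0 := by positivity
    have : (k : ℝ) + 1 + 1 + ν ≠ 0 := by positivity
    simp only [ultraBeta_succ, Nat.cast_add, Nat.cast_one]
    field_simp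
    ring

def monicLegendre : ℕ → ℝ[X] := threeTermPoly (ultraBeta (1 / 2))

namespace monicLegendre

lemma mul_ultraBeta_half_succ (k : ℕ) :
    (2 * k + 1) * (2 * k + 3) * ultraBeta (1 / 2) (k + 1) = ((k : ℝ) + 1) ^ 2 := by
  rw [ultraBeta_succ]
  field_simp
  ring

variable (x : ℝ) (k : ℕ)

lemma eval_rec : (2 * k + 1) * (2 * k + 3) * (monicLegendre (k + 2)).eval x =
    (2 * k + 1) * (2 * k + 3) * (x * (monicLegendre (k + 1)).eval x) -
      ((k : ℝ) + 1) ^ 2 * (monicLegendre k).eval x := by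
  rw [monicLegendre, threeTermPoly.eval_add_two, ← mul_ultraBeta_half_succ]
  ring

lemma derivative_eval_rec :
    (2 * k + 1) * (2 * k + 3) * (derivative (monicLegendre (k + 2))).eval x =
      (2 * k + 1) * (2 * k + 3) * ((monicLegendre (k + 1)).eval x +
        x * (derivative (monicLegendre (k + 1))).eval x) -
      ((k : ℝ) + 1) ^ 2 * (derivative (monicLegendre k)).eval x := by
  rw [monicLegendre, threeTermPoly.derivative_add_two, ← mul_ultraBeta_half_succ]
  simp only [eval_sub, eval_add, eval_mul, eval_X, eval_C]
  ring

lemma derivative_derivative_eval_rec :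
    (2 * k + 1) * (2 * k + 3) * (derivative (derivative (monicLegendre (k + 2)))).eval x =
      (2 * k + 1) * (2 * k + 3) * (2 * (derivative (monicLegendre (k + 1))).eval x +
        x * (derivative (derivative (monicLegendre (k + 1)))).eval x) -
      ((k : ℝ) + 1) ^ 2 * (derivative (derivative (monicLegendre k))).eval x := by
  rw [monicLegendre, threeTermPoly.derivative_add_two]
  simp only [derivative_add, derivative_sub, derivative_mul, derivative_X, derivative_C,
    one_mul, zero_mul, zero_add, eval_sub, eval_add, eval_mul, eval_X, eval_C,
    ← mul_ultraBeta_half_succ]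
  ring

lemma structure_relation (n : ℕ) :
    (2 * n + 1) * (1 - x ^ 2) * (derivative (monicLegendre (n + 1))).eval x =
      (n + 1) * ((n + 1) * (monicLegendre n).eval x -
        (2 * n + 1) * x * (monicLegendre (n + 1)).eval x) := by
  induction n using Nat.twoStepInduction with
  | zero => simp [monicLegendre]; ring
  | one =>
    simp [monicLegendre, threeTermPoly.add_two, ultraBeta]
    ring
  | more n ih₀ ih₁ =>
    have hne : (2 * n + 1) * (2 * n + 3) ≠ (0 : ℝ) := by positivity
    refine mul_left_cancel₀ hne ?_
    push_cast at ih₀ ih₁ ⊢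
    have hL₀ := eval_rec x n
    have hL₁ := eval_rec x (n + 1)
    have hD₁ := derivative_eval_rec x (n + 1)
    push_cast at hL₀ hL₁ hD₁
    linear_combination (2 * n + 1) * (1 - x ^ 2) * hD₁ + (2 * n + 1) * (2 * n + 5) * x * ih₁ -
      ((n : ℝ) + 2) ^ 2 * ih₀ + (n + 3) * (2 * n + 1) * x * hL₁ - ((n : ℝ) + 2) ^ 2 * hL₀

lemma ode (n : ℕ) :
    (1 - x ^ 2) * (derivative (derivative (monicLegendre n))).eval x =
      2 * x * (derivative (monicLegendre n)).eval x - n * (n + 1) * (monicLegendre n).eval x := by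
  induction n using Nat.twoStepInduction with
  | zero => simp [monicLegendre]
  | one => simp [monicLegendre]; ring
  | more n ih₀ ih₁ =>
    have hne : (2 * n + 1) * (2 * n + 3) ≠ (0 : ℝ) := by positivity
    refine mul_left_cancel₀ hne ?_
    have hL := eval_rec x n
    have hD := derivative_eval_rec x n
    have hE := derivative_derivative_eval_rec x n
    have hS := structure_relation x n
    push_cast at ih₀ ih₁ ⊢
    linear_combination (1 - x ^ 2) * hE - 2 * x * hD + ((n : ℝ) + 2) * (n + 3) * hL +
      (2 * n + 1) * (2 * n + 3) * x * ih₁ - ((n : ℝ) + 1) ^ 2 * ih₀ + 2 * (2 * n + 3) * hS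

-- Sonine's function `n(n+1) P² + (1 - x²) P'²`, whose derivative is `2x P'²` by the ODE.
lemma monotoneOn_sonine (n : ℕ) :
    MonotoneOn (fun t ↦ n * (n + 1) * (monicLegendre n).eval t ^ 2 +
      (1 - t ^ 2) * (derivative (monicLegendre n)).eval t ^ 2) (Set.Icc 0 1) := by
  set P := monicLegendre n
  let F : ℝ[X] := C ((n : ℝ) * (n + 1)) * P ^ 2 + (1 - X ^ 2) * derivative P ^ 2
  have hF : ∀ t,
      F.eval t = n * (n + 1) * P.eval t ^ 2 + (1 - t ^ 2) * (derivative P).eval t ^ 2 :=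
    fun t ↦ by simp [F]
  have hF' : ∀ t, (derivative F).eval t = 2 * t * (derivative P).eval t ^ 2 := by
    intro t
    simp only [F, derivative_add, derivative_mul, derivative_C, derivative_sub, derivative_one,
      derivative_X, derivative_pow, zero_mul, zero_add, eval_add, eval_mul, eval_C, eval_sub,
      eval_pow, eval_X, eval_one, eval_zero, eval_natCast, map_natCast]
    linear_combination 2 * (derivative P).eval t * ode t n
  simp_rw [← hF]
  refine monotoneOn_of_deriv_nonneg (convex_Icc 0 1) F.continuous.continuousOn
    F.differentiable.differentiableOn fun t ht ↦ ?_
  rw [interior_Icc] at ht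
  rw [Polynomial.deriv, hF']
  have := ht.1.le
  positivity

lemma eval_one_pos (n : ℕ) : 0 < (monicLegendre n).eval 1 := by
  have := ultraP_eval_one_pos (ν := 1 / 2) (by norm_num) n
  rwa [ultraP_eq] at this

lemma abs_eval_le_eval_one {x : ℝ} (hx : x ∈ Set.Icc (-1 : ℝ) 1) (n : ℕ) :
    |(monicLegendre n).eval x| ≤ (monicLegendre n).eval 1 := by
  have hpos := eval_one_pos n
  suffices ∀ y ∈ Set.Icc (0 : ℝ) 1, |(monicLegendre n).eval y| ≤ (monicLegendre n).eval 1 by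
    rcases le_total 0 x with h | h
    · exact this x ⟨h, hx.2⟩
    · simpa [monicLegendre, threeTermPoly.eval_neg, abs_mul] using
        this (-x) ⟨neg_nonneg.2 h, neg_le.1 hx.1⟩
  intro y hy
  obtain rfl | hn := n.eq_zero_or_pos
  · simp [monicLegendre]
  have hsonine := monotoneOn_sonine n hy ⟨zero_le_one, le_rfl⟩ hy.2
  have hy2 : 0 ≤ (1 - y ^ 2) * (derivative (monicLegendre n)).eval y ^ 2 := by
    have : y ^ 2 ≤ 1 := pow_le_one₀ hy.1 hy.2
    have : 0 ≤ 1 - y ^ 2 := by linarith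
    positivity
  have hcoef : (0 : ℝ) < n * (n + 1) := by positivity
  rw [← abs_of_pos hpos, ← sq_le_sq]
  refine le_of_mul_le_mul_left ?_ hcoef
  simp only [one_pow, sub_self, zero_mul, add_zero] at hsonine
  linarith

end monicLegendre

lemma ultraBeta_nonneg {ν : ℝ} (hν : 1 / 2 ≤ ν) {k : ℕ} (hk : 1 ≤ k) :
    0 ≤ ultraBeta ν k := by
  have hk' : (1 : ℝ) ≤ k := by exact_mod_cast hk
  have : 0 ≤ (k : ℝ) + ν - 1 := by linarith
  have : 0 ≤ (k : ℝ) + 2 * ν - 1 := by linarith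
  unfold ultraBeta
  positivity

lemma ultraBeta_le_ultraBeta_half {ν : ℝ} (hν : 1 / 2 < ν) {j k : ℕ} (hj : 1 ≤ j)
    (hjk : j ≤ k) :
    ultraBeta ν k ≤ ultraBeta (1 / 2) j := by
  have hj' : (1 : ℝ) ≤ j := by exact_mod_cast hj
  have hjk' : (j : ℝ) ≤ k := by exact_mod_cast hjk
  calc ultraBeta ν k ≤ (k : ℝ) ^ 2 / (4 * (k : ℝ) ^ 2 - 1) := by
        unfold ultraBeta
        rw [div_le_div_iff₀ (by nlinarith) (by nlinarith)]
        nlinarith [sq_nonneg (2 * ν - 1), mul_nonneg (by linarith : (0 : ℝ) ≤ 2 * ν - 1)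
          (by nlinarith : (0 : ℝ) ≤ (k : ℝ) * (k - 1))]
    _ ≤ (j : ℝ) ^ 2 / (4 * (j : ℝ) ^ 2 - 1) := by
        rw [div_le_div_iff₀ (by nlinarith) (by nlinarith)]
        nlinarith
    _ = ultraBeta (1 / 2) j := by unfold ultraBeta; ring_nf

lemma update_ultraBeta_le_ultraBeta_half {ν lam : ℝ} (hν : 1 / 2 < ν) (hlam : lam ≤ 1)
    {j k : ℕ} (hj : 1 ≤ j) (hjk : j ≤ k) :
    Function.update (ultraBeta ν) 1 (lam * ultraBeta ν 1) k ≤ ultraBeta (1 / 2) j := by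
  rw [Function.update_apply]
  split_ifs with hk
  · obtain rfl : j = 1 := by omega
    exact (mul_le_of_le_one_left (ultraBeta_nonneg hν.le le_rfl) hlam).trans
      (ultraBeta_le_ultraBeta_half hν le_rfl le_rfl)
  · exact ultraBeta_le_ultraBeta_half hν hj hjk

lemma threeTermPoly_bound_of_le_ultraBeta_half {b : ℕ → ℝ}
    (hb : ∀ k j, 1 ≤ j → j ≤ k → b k ≤ ultraBeta (1 / 2) j) {x : ℝ}
    (hx : x ∈ Set.Icc (-1 : ℝ) 1) (n : ℕ) :
    0 < (threeTermPoly b n).eval 1 ∧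
      |(threeTermPoly b n).eval x| ≤ (threeTermPoly b n).eval 1 :=
  have hg : ∀ j, 1 ≤ j → 0 ≤ ultraBeta (1 / 2) j := fun _ hj ↦ ultraBeta_nonneg le_rfl hj
  ⟨threeTermPoly_eval_one_pos_of_le hg hb monicLegendre.eval_one_pos n,
    abs_eval_threeTermPoly_le_of_le hg hb (monicLegendre.abs_eval_le_eval_one hx) n⟩

lemma ultraPstar_bound_of_le_one {ν lam x : ℝ} (hν : 1 / 2 < ν) (hlam : lam ≤ 1)
    (hx : x ∈ Set.Icc (-1 : ℝ) 1) (n : ℕ) :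
    0 < (ultraPstar ν lam n).eval 1 ∧
      |(ultraPstar ν lam n).eval x| ≤ (ultraPstar ν lam n).eval 1 := by
  rw [ultraPstar_eq]
  exact threeTermPoly_bound_of_le_ultraBeta_half
    (fun _ _ hj hjk ↦ update_ultraBeta_le_ultraBeta_half hν hlam hj hjk) hx n

lemma ultraPstar_bound_of_one_lt {ν lam x : ℝ} (hν : 1 / 2 < ν) (hlam₁ : 1 < lam)
    (hlam₂ : lam < 2 * ν) (hx : x ∈ Set.Icc (-1 : ℝ) 1) (m : ℕ) :
    0 < (ultraPstar ν lam (m + 1)).eval 1 ∧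
      |(ultraPstar ν lam (m + 1)).eval x| ≤
        |2 * ν * (2 * lam - 1) - lam| / (2 * ν - lam) * (ultraPstar ν lam (m + 1)).eval 1 := by
  have hdecomp : ∀ y, (ultraPstar ν lam (m + 1)).eval y =
      lam * (ultraP ν (m + 1)).eval y + (1 - lam) * (y * (ultraQ ν m).eval y) := fun y ↦ by
    simp [ultraPstar_eq, ultraP_eq, ultraQ_eq, threeTermPoly_update_one]
  obtain ⟨hp, hPx⟩ := threeTermPoly_bound_of_le_ultraBeta_half (b := ultraBeta ν)
    (fun _ _ hj hjk ↦ ultraBeta_le_ultraBeta_half hν hj hjk) hx (m + 1)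
  obtain ⟨-, hQx⟩ :=
    threeTermPoly_bound_of_le_ultraBeta_half (b := fun k ↦ ultraBeta ν (k + 1))
    (fun _ _ hj hjk ↦ ultraBeta_le_ultraBeta_half hν hj (by omega)) hx m
  rw [← ultraP_eq] at hp hPx
  rw [← ultraQ_eq] at hQx
  set p := (ultraP ν (m + 1)).eval 1
  set q := (ultraQ ν m).eval 1
  have hpq : (2 * ν - 1) * q < 2 * ν * p := two_mul_sub_one_mul_ultraQ_eval_one_lt (by linarith) m
  have hxQ : |x * (ultraQ ν m).eval x| ≤ q := by
    rw [abs_mul]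
    exact (mul_le_of_le_one_left (abs_nonneg _) (abs_le.2 hx)).trans hQx
  have hupper : |(ultraPstar ν lam (m + 1)).eval x| ≤ lam * p + (lam - 1) * q := by
    rw [hdecomp]
    refine (abs_add_le _ _).trans ?_
    rw [abs_mul, abs_mul, abs_of_pos (by linarith : 0 < lam),
      abs_of_neg (by linarith : 1 - lam < 0), neg_sub]
    gcongr
  have hκ : 0 < 2 * ν - lam := by linarith
  have hpos : 0 < lam * p + (1 - lam) * q := by nlinarith
  rw [hdecomp, one_mul]
  refine ⟨hpos, hupper.trans ?_⟩
  rw [abs_of_pos (by nlinarith), div_mul_eq_mul_div, le_div_iff₀ hκ]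
  -- the difference of the two sides is `2λ(λ - 1)(2νp - (2ν - 1)q)`
  nlinarith [mul_pos (mul_pos (by linarith : 0 < lam) (by linarith : 0 < lam - 1))
    (sub_pos.2 hpq)]

theorem codilated_ultraspherical_uniform_bound (ν : ℝ) (hν : 1 / 2 < ν)
    (n : ℕ) (hn : 1 ≤ n) (lam : ℝ) (x : ℝ) (hx : x ∈ Set.Icc (-1 : ℝ) 1) :
    (0 ≤ lam → lam ≤ 1 →
      0 < (ultraPstar ν lam n).eval 1 ∧
      |(ultraPstar ν lam n).eval x| ≤ (ultraPstar ν lam n).eval 1) ∧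
    ((1 < lam ∧ lam < 2 * ν) ∨ lam < 0 →
      0 < (ultraPstar ν lam n).eval 1 ∧
      |(ultraPstar ν lam n).eval x| ≤
        |2 * ν * (2 * lam - 1) - lam| / (2 * ν - lam) * (ultraPstar ν lam n).eval 1) := by
  obtain ⟨m, rfl⟩ : ∃ m, n = m + 1 := ⟨n - 1, by omega⟩
  refine ⟨fun _ hlam ↦ ultraPstar_bound_of_le_one hν hlam hx _, ?_⟩
  rintro (⟨hlam₁, hlam₂⟩ | hlam)
  · exact ultraPstar_bound_of_one_lt hν hlam₁ hlam₂ hx m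
  · obtain ⟨hpos, hle⟩ := ultraPstar_bound_of_le_one hν (hlam.le.trans zero_le_one) hx (m + 1)
    refine ⟨hpos, hle.trans (le_mul_of_one_le_left hpos.le ?_)⟩
    rw [abs_of_neg (by nlinarith), le_div_iff₀ (by linarith)]
    nlinarith
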